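/- arXiv:2012.02192 — 3 statements merged into one kernel-verified Lean document; each statement's English description precedes it below -/
import Mathlib

section
/- Incrementality of constraints is preserved under restriction: if n : L → N is an incremental monomorphism of graphs and n = b ∘ a is any factorization with a : L → X and b : X → N both monos, then a : L → X is incremental. -/
open CategoryTheory CategoryTheory.Limits

/-!
Composing with `b` turns two mono factorizations of `a` into mono factorizations of `n`;
incrementality of `n` compares them over `N`, and since `b` is mono the comparison
already commutes over `X`.
-/

/-- A directed graph: sets of nodes and edges with source and target functions. -/
structure DGraph : Type 1 where
  N : Type
  E : Type
  s : E → N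
  t : E → N

/-- A graph morphism: node and edge maps commuting with source and target. -/
@[ext]
structure GraphHom (G G' : DGraph) : Type where
  fN : G.N → G'.N
  fE : G.E → G'.E
  comm_s : ∀ e, fN (G.s e) = G'.s (fE e)
  comm_t : ∀ e, fN (G.t e) = G'.t (fE e)

instance : Category DGraph where
  Hom := GraphHom
  id G := ⟨id, id, fun _ => rfl, fun _ => rfl⟩
  comp f g := ⟨g.fN ∘ f.fN, g.fE ∘ f.fE,
    fun e => by simp only [Function.comp_apply, f.comm_s, g.comm_s],
    fun e => by simp only [Function.comp_apply, f.comm_t, g.comm_t]⟩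
  id_comp _ := rfl
  comp_id _ := rfl
  assoc _ _ _ := rfl

/-- A mono `n : L ⟶ N` is incremental if any two mono factorizations of it are comparable. -/
def Incremental {L N : DGraph} (n : L ⟶ N) : Prop :=
  Mono n ∧ ∀ {X₁ X₂ : DGraph} (a₁ : L ⟶ X₁) (b₁ : X₁ ⟶ N) (a₂ : L ⟶ X₂) (b₂ : X₂ ⟶ N),
    Mono a₁ → Mono b₁ → Mono a₂ → Mono b₂ → a₁ ≫ b₁ = n → a₂ ≫ b₂ = n →
    (∃ x : X₁ ⟶ X₂, a₁ ≫ x = a₂ ∧ x ≫ b₂ = b₁) ∨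
    (∃ x : X₂ ⟶ X₁, a₂ ≫ x = a₁ ∧ x ≫ b₁ = b₂)

theorem exists_comparison_of_comp_mono {C : Type*} [Category C] {L Y Z X N : C}
    {aY : L ⟶ Y} {bY : Y ⟶ X} {aZ : L ⟶ Z} {bZ : Z ⟶ X} {b : X ⟶ N} (hb : Mono b)
    (h : ∃ x : Y ⟶ Z, aY ≫ x = aZ ∧ x ≫ bZ ≫ b = bY ≫ b) :
    ∃ x : Y ⟶ Z, aY ≫ x = aZ ∧ x ≫ bZ = bY :=
  h.imp fun _ ⟨hxa, hxb⟩ => ⟨hxa, hb.right_cancellation _ _ (by rwa [Category.assoc])⟩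

/-- Incrementality is preserved under restriction: if `n = a ≫ b` with `a, b` mono
and `n` incremental, then `a` is incremental. -/
theorem incremental_of_factor {L X N : DGraph} (n : L ⟶ N) (a : L ⟶ X) (b : X ⟶ N)
    (ha : Mono a) (hb : Mono b) (hfac : a ≫ b = n) (hinc : Incremental n) :
    Incremental a := by
  refine ⟨ha, fun a₁ b₁ a₂ b₂ ha₁ hb₁ ha₂ hb₂ hfac₁ hfac₂ => ?_⟩
  have hn₁ : a₁ ≫ b₁ ≫ b = n := by rw [← Category.assoc, hfac₁, hfac]
  have hn₂ : a₂ ≫ b₂ ≫ b = n := by rw [← Category.assoc, hfac₂, hfac]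
  exact (hinc.2 a₁ (b₁ ≫ b) a₂ (b₂ ≫ b) ha₁ (mono_comp' hb₁ hb) ha₂ (mono_comp' hb₂ hb)
    hn₁ hn₂).imp (exists_comparison_of_comp_mono hb) (exists_comparison_of_comp_mono hb)
end

section
/- For the enriched type graph construction, the body of each constraint shape has two distinct monomorphisms into the enriched type graph whenever the shape morphism is not an isomorphism: if the enriched type graph TG' is built as the colimit of TG together with all shapes n⁻ : L⁻ → N⁻ (glued along the typings L⁻ → TG), then for each shape the colimit injection N⁻ → TG' and the composite N⁻ → TG → TG' agree on L⁻ but are distinct maps, provided n⁻ is not an iso. -/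
open CategoryTheory CategoryTheory.Limits

/-- The diagram whose colimit is the enriched type graph: the type graph `TG` together
with all constraint shapes `n⁻ : L⁻ᵢ ⟶ N⁻ᵢ` glued along the typings `L⁻ᵢ ⟶ TG`. -/
def shapesIndex (ι : Type) (TG : DGraph) (border body : ι → DGraph)
    (shape : ∀ i, border i ⟶ body i) (tL : ∀ i, border i ⟶ TG) :
    MultispanIndex (MultispanShape.mk ι (Option ι) (fun i => some i)
      (fun _ => none)) DGraph where
  left := border
  right := fun r => Option.rec TG body r
  fst := shape
  snd := tL

/-!
The body `N⁻` of a shape is tested against the graph `flagGraph` (nodes `Bool`, an edge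
for every triple of flags), a crude subobject classifier for graphs. Every graph maps to it
by the constant "true" map, and the border of a shape is the part of its body sent to "true"
by the characteristic map of `n⁻`. These maps form a cocone on the enriched type graph
diagram, so if the two morphisms `N⁻ ⟶ TG'` agreed, the characteristic map of `n⁻` would be
constant "true": then `n⁻` is surjective, and being mono it is an isomorphism.
-/

namespace DGraph

def point : DGraph := ⟨Unit, Empty, Empty.elim, Empty.elim⟩

def walkingEdge : DGraph := ⟨Bool, Unit, fun _ => false, fun _ => true⟩

def pointHom (G : DGraph) (x : G.N) : point ⟶ G :=
  ⟨fun _ => x, Empty.elim, fun e => e.elim, fun e => e.elim⟩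

def walkingEdgeHom (G : DGraph) (e : G.E) : walkingEdge ⟶ G :=
  ⟨fun b => bif b then G.t e else G.s e, fun _ => e, fun _ => rfl, fun _ => rfl⟩

variable {G H : DGraph}

@[ext]
lemma hom_ext {f g : G ⟶ H} (hN : f.fN = g.fN) (hE : f.fE = g.fE) : f = g :=
  GraphHom.ext hN hE

lemma injective_fN_of_mono (f : G ⟶ H) [Mono f] : Function.Injective f.fN := by
  intro x y hxy
  have h : pointHom G x ≫ f = pointHom G y ≫ f := by
    ext
    · exact hxy
    · exact (Empty.elim ‹_›)
  exact congrFun (congrArg GraphHom.fN ((cancel_mono f).mp h)) ()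

lemma injective_fE_of_mono (f : G ⟶ H) [Mono f] : Function.Injective f.fE := by
  intro e₁ e₂ he
  have h : walkingEdgeHom G e₁ ≫ f = walkingEdgeHom G e₂ ≫ f := by
    ext b
    · cases b
      · change f.fN (G.s e₁) = f.fN (G.s e₂)
        rw [f.comm_s, f.comm_s, he]
      · change f.fN (G.t e₁) = f.fN (G.t e₂)
        rw [f.comm_t, f.comm_t, he]
    · exact he
  exact congrFun (congrArg GraphHom.fE ((cancel_mono f).mp h)) ()

lemma isIso_of_bijective (f : G ⟶ H) (hN : Function.Bijective f.fN)
    (hE : Function.Bijective f.fE) : IsIso f := by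
  let eN := Equiv.ofBijective f.fN hN
  let eE := Equiv.ofBijective f.fE hE
  have hs (e : H.E) : eN.symm (H.s e) = G.s (eE.symm e) := by
    rw [Equiv.symm_apply_eq, Equiv.ofBijective_apply, f.comm_s]
    exact congrArg H.s (eE.apply_symm_apply e).symm
  have ht (e : H.E) : eN.symm (H.t e) = G.t (eE.symm e) := by
    rw [Equiv.symm_apply_eq, Equiv.ofBijective_apply, f.comm_t]
    exact congrArg H.t (eE.apply_symm_apply e).symm
  refine ⟨⟨⟨eN.symm, eE.symm, hs, ht⟩, ?_, ?_⟩⟩ <;> ext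
  · exact eN.symm_apply_apply _
  · exact eE.symm_apply_apply _
  · exact eN.apply_symm_apply _
  · exact eE.apply_symm_apply _

lemma isIso_of_mono_of_surjective (f : G ⟶ H) [Mono f] (hN : Function.Surjective f.fN)
    (hE : Function.Surjective f.fE) : IsIso f :=
  isIso_of_bijective f ⟨injective_fN_of_mono f, hN⟩ ⟨injective_fE_of_mono f, hE⟩

/-- An edge carries the flags of its source, of its target and its own. -/
def flagGraph : DGraph := ⟨Bool, Bool × Bool × Bool, Prod.fst, fun e => e.2.1⟩

def trueMap (G : DGraph) : G ⟶ flagGraph :=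
  ⟨fun _ => true, fun _ => (true, true, true), fun _ => rfl, fun _ => rfl⟩

open Classical in
noncomputable def charMap (f : G ⟶ H) : H ⟶ flagGraph where
  fN x := decide (x ∈ Set.range f.fN)
  fE e := (decide (H.s e ∈ Set.range f.fN), decide (H.t e ∈ Set.range f.fN),
    decide (e ∈ Set.range f.fE))
  comm_s _ := rfl
  comm_t _ := rfl

@[simp]
lemma comp_trueMap (f : G ⟶ H) : f ≫ trueMap H = trueMap G := rfl

open Classical in
@[simp]
lemma comp_charMap (f : G ⟶ H) : f ≫ charMap f = trueMap G := by
  ext x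
  · change decide (f.fN x ∈ Set.range f.fN) = true
    simp
  · change (decide (H.s (f.fE x) ∈ Set.range f.fN), decide (H.t (f.fE x) ∈ Set.range f.fN),
      decide (f.fE x ∈ Set.range f.fE)) = (true, true, true)
    simp only [← f.comm_s, ← f.comm_t, Set.mem_range_self, decide_true]

open Classical in
lemma surjective_of_charMap_eq_trueMap {f : G ⟶ H} (h : charMap f = trueMap H) :
    Function.Surjective f.fN ∧ Function.Surjective f.fE := by
  refine ⟨fun x => ?_, fun e => ?_⟩
  · exact of_decide_eq_true (congrFun (congrArg GraphHom.fN h) x)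
  · exact of_decide_eq_true (congrArg (·.2.2) (congrFun (congrArg GraphHom.fE h) e))

end DGraph

open DGraph

section EnrichedTypeGraph

variable {ι : Type} {TG : DGraph} {border body : ι → DGraph} {shape : ∀ i, border i ⟶ body i}
  {tL : ∀ i, border i ⟶ TG}

noncomputable def descCharMap {K : Multicofork (shapesIndex ι TG border body shape tL)}
    (hK : IsColimit K) : K.pt ⟶ flagGraph :=
  Multicofork.IsColimit.desc hK
    (fun r => match r with
      | none => trueMap TG
      | some j => charMap (shape j))
    (fun j => (comp_charMap (shape j)).trans (comp_trueMap (tL j)).symm)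

lemma π_none_descCharMap {K : Multicofork (shapesIndex ι TG border body shape tL)}
    (hK : IsColimit K) : K.π (none : Option ι) ≫ descCharMap hK = trueMap TG :=
  Multicofork.IsColimit.fac hK _ _ _

lemma π_some_descCharMap {K : Multicofork (shapesIndex ι TG border body shape tL)}
    (hK : IsColimit K) (i : ι) : K.π (some i) ≫ descCharMap hK = charMap (shape i) :=
  Multicofork.IsColimit.fac hK _ _ _

lemma surjective_of_π_eq {K : Multicofork (shapesIndex ι TG border body shape tL)}
    (hK : IsColimit K) {i : ι} (tN : body i ⟶ TG)
    (h : K.π (some i) = tN ≫ K.π (none : Option ι)) :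
    Function.Surjective (shape i).fN ∧ Function.Surjective (shape i).fE := by
  apply surjective_of_charMap_eq_trueMap
  have hchar : charMap (shape i) = tN ≫ K.π (none : Option ι) ≫ descCharMap hK :=
    (π_some_descCharMap hK i).symm.trans
      ((congrArg (· ≫ descCharMap hK) h).trans (Category.assoc _ _ _))
  exact hchar.trans (congrArg (tN ≫ ·) (π_none_descCharMap hK))

end EnrichedTypeGraph

theorem enriched_type_graph_two_monos_general (ι : Type) (TG : DGraph)
    (border body : ι → DGraph) (shape : ∀ i, border i ⟶ body i)
    (tL : ∀ i, border i ⟶ TG) (tN : ∀ i, body i ⟶ TG)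
    (hshape : ∀ i, Mono (shape i))
    (hcomm : ∀ i, shape i ≫ tN i = tL i)
    (K : Multicofork (shapesIndex ι TG border body shape tL)) (hK : IsColimit K)
    (i : ι) (hni : ¬ IsIso (shape i)) :
    shape i ≫ K.π (some i) = shape i ≫ (tN i ≫ K.π (none : Option ι)) ∧
    K.π (some i) ≠ tN i ≫ K.π (none : Option ι) := by
  refine ⟨?_, fun h => hni ?_⟩
  · exact (K.condition i).trans
      ((congrArg (· ≫ K.π (none : Option ι)) (hcomm i)).symm.trans (Category.assoc _ _ _))
  · obtain ⟨hN, hE⟩ := surjective_of_π_eq hK (tN i) h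
    exact isIso_of_mono_of_surjective (shape i) hN hE

/-- In the enriched type graph (the colimit of `TG` with all shapes glued along the
typings of their borders), for each shape whose shape morphism is not an iso, the colimit
injection of the body and the composite through `TG` agree on the border but are distinct. -/
theorem enriched_type_graph_two_monos (ι : Type) (TG : DGraph)
    (border body : ι → DGraph) (shape : ∀ i, border i ⟶ body i)
    (tL : ∀ i, border i ⟶ TG) (tN : ∀ i, body i ⟶ TG)
    (hshape : ∀ i, Mono (shape i)) (htL : ∀ i, Mono (tL i)) (htN : ∀ i, Mono (tN i))
    (hcomm : ∀ i, shape i ≫ tN i = tL i)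
    (K : Multicofork (shapesIndex ι TG border body shape tL)) (hK : IsColimit K)
    (i : ι) (hni : ¬ IsIso (shape i)) :
    shape i ≫ K.π (some i) = shape i ≫ (tN i ≫ K.π (none : Option ι)) ∧
    K.π (some i) ≠ tN i ≫ K.π (none : Option ι) :=
  enriched_type_graph_two_monos_general ι TG border body shape tL tN hshape hcomm K hK i hni
end

section
/- There is no monomorphism from a graph violating the complementation invariant to a graph satisfying it: if a typed graph X over the enriched type graph contains, for some constraint shape, both an occurrence of the body N⁻ and a parallel occurrence of the body complement over the same border occurrence, and G satisfies the complementation invariant Φ_inv, then there is no mono X → G. -/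
open CategoryTheory CategoryTheory.Limits

/-- A typed graph `G` over the enriched type graph `TG'` satisfies the complementation
invariant if every occurrence of a border extends to an occurrence of the body xor to an
occurrence of the body complement. -/
def SatInv (ι : Type) (TG' : DGraph) (Lb Nb Ncb : ι → Over TG')
    (nb : ∀ i, Lb i ⟶ Nb i) (ncb : ∀ i, Lb i ⟶ Ncb i) (G : Over TG') : Prop :=
  ∀ (i : ι) (o : Lb i ⟶ G), Mono o →
    Xor' (∃ q : Nb i ⟶ G, Mono q ∧ nb i ≫ q = o)
         (∃ q : Ncb i ⟶ G, Mono q ∧ ncb i ≫ q = o)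

theorem exists_mono_extension_comp {C : Type*} [Category C] {L N X G : C} {n : L ⟶ N}
    {o : L ⟶ X} (h : ∃ q : N ⟶ X, Mono q ∧ n ≫ q = o) (f : X ⟶ G) [Mono f] :
    ∃ q : N ⟶ G, Mono q ∧ n ≫ q = o ≫ f := by
  obtain ⟨q, hq, rfl⟩ := h
  exact ⟨q ≫ f, mono_comp q f, (Category.assoc n q f).symm⟩

/-- There is no monomorphism from a graph violating the complementation invariant
(containing, over a common border occurrence, both the body and the body complement of
some shape) to a graph satisfying it. -/
theorem no_mono_of_invariant_violation (ι : Type) (TG' : DGraph)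
    (Lb Nb Ncb : ι → Over TG')
    (nb : ∀ i, Lb i ⟶ Nb i) (ncb : ∀ i, Lb i ⟶ Ncb i)
    (X G : Over TG') (i : ι) (o : Lb i ⟶ X) (ho : Mono o)
    (qb : Nb i ⟶ X) (hqb : Mono qb) (hb : nb i ≫ qb = o)
    (qc : Ncb i ⟶ X) (hqc : Mono qc) (hc : ncb i ≫ qc = o)
    (hG : SatInv ι TG' Lb Nb Ncb nb ncb G) :
    ¬ ∃ f : X ⟶ G, Mono f := by
  rintro ⟨f, hf⟩
  have hbody := exists_mono_extension_comp ⟨qb, hqb, hb⟩ f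
  have hcompl := exists_mono_extension_comp ⟨qc, hqc, hc⟩ f
  exact (xor_iff_or_and_not_and _ _).1 (hG i (o ≫ f) (mono_comp o f)) |>.2 ⟨hbody, hcompl⟩
end
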